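/- arXiv:0803.2647 — 10 statements merged into one kernel-verified Lean document; each statement's English description precedes it below -/
import Mathlib

section
/- Let E be a finite-dimensional real normed space and let A : E → ℝ be a convex and superlinear function (i.e. A(x)/‖x‖ → ∞ as ‖x‖ → ∞). Then the Fenchel transform B(y) := sup_{x ∈ E} (⟨y,x⟩ − A(x)) is well-defined (finite for every y in the dual), convex, and superlinear. -/
/-- Fenchel transform: well-defined (bounded above), convex, superlinear. -/
theorem stmt_0 {E : Type*} [NormedAddCommGroup E] [NormedSpace ℝ E] [FiniteDimensional ℝ E]
    (A : E → ℝ) (hconv : ConvexOn ℝ Set.univ A)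
    (hsup : ∀ C > (0:ℝ), ∃ R : ℝ, ∀ x : E, R ≤ ‖x‖ → C * ‖x‖ ≤ A x) :
    (∀ y : E →L[ℝ] ℝ, BddAbove (Set.range fun x : E => y x - A x)) ∧
    ConvexOn ℝ Set.univ (fun y : E →L[ℝ] ℝ => ⨆ x : E, (y x - A x)) ∧
    (∀ C > (0:ℝ), ∃ R : ℝ, ∀ y : E →L[ℝ] ℝ, R ≤ ‖y‖ →
      C * ‖y‖ ≤ ⨆ x : E, (y x - A x)) := by
  have hAcont : Continuous A := by
    have := hconv.continuousOn isOpen_univ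
    exact continuousOn_univ.mp this
  have hbdd : ∀ y : E →L[ℝ] ℝ, BddAbove (Set.range fun x : E => y x - A x) := by
    intro y
    obtain ⟨R, hR⟩ := hsup (‖y‖ + 1) (by positivity)
    have hcomp : IsCompact (Metric.closedBall (0 : E) (max R 0)) :=
      isCompact_closedBall _ _
    have hcont : Continuous fun x : E => y x - A x := (y.continuous).sub hAcont
    obtain ⟨M, hM⟩ := (hcomp.image hcont).bddAbove
    refine ⟨max M 0, ?_⟩
    rintro _ ⟨x, rfl⟩
    show y x - A x ≤ max M 0
    by_cases hx : ‖x‖ ≤ max R 0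
    · exact le_trans (hM ⟨x, by simpa [Metric.mem_closedBall, dist_zero_right] using hx, rfl⟩)
        (le_max_left _ _)
    · push_neg at hx
      have h1 : (‖y‖ + 1) * ‖x‖ ≤ A x := hR x (le_trans (le_max_left _ _) hx.le)
      have h2 : y x ≤ ‖y‖ * ‖x‖ := le_trans (le_abs_self _) (by
        simpa [Real.norm_eq_abs] using y.le_opNorm x)
      have h3 : (0:ℝ) ≤ ‖x‖ := norm_nonneg x
      have h4 : (0:ℝ) ≤ max M 0 := le_max_right _ _
      nlinarith
  refine ⟨hbdd, ⟨convex_univ, ?_⟩, ?_⟩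
  · intro y₁ _ y₂ _ a b ha hb hab
    refine ciSup_le fun x => ?_
    have h1 : y₁ x - A x ≤ ⨆ x : E, (y₁ x - A x) := le_ciSup (hbdd y₁) x
    have h2 : y₂ x - A x ≤ ⨆ x : E, (y₂ x - A x) := le_ciSup (hbdd y₂) x
    have h1' := mul_le_mul_of_nonneg_left h1 ha
    have h2' := mul_le_mul_of_nonneg_left h2 hb
    have hA : a * A x + b * A x = A x := by rw [← add_mul, hab, one_mul]
    simp only [ContinuousLinearMap.add_apply, ContinuousLinearMap.coe_smul',
      Pi.smul_apply, smul_eq_mul]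
    linarith
  · intro C hC
    obtain ⟨M, hM⟩ := ((isCompact_closedBall (0 : E) (4 * C)).image hAcont).bddAbove
    refine ⟨max (M / C) 1, fun y hy => ?_⟩
    have hy1 : (1:ℝ) ≤ ‖y‖ := le_trans (le_max_right _ _) hy
    have hyM : M ≤ C * ‖y‖ := by
      have : M / C ≤ ‖y‖ := le_trans (le_max_left _ _) hy
      calc M = C * (M / C) := by field_simp
        _ ≤ C * ‖y‖ := by nlinarith
    obtain ⟨x₀, hx₀, hx₀'⟩ := y.exists_lt_apply_of_lt_opNorm
      (show ‖y‖ / 2 < ‖y‖ by linarith)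
    rw [Real.norm_eq_abs] at hx₀'
    -- choose z₀ with ‖z₀‖ < 1 and ‖y‖/2 < y z₀
    obtain ⟨z₀, hz₀, hz₀'⟩ : ∃ z : E, ‖z‖ < 1 ∧ ‖y‖ / 2 < y z := by
      rcases lt_abs.mp hx₀' with h | h
      · exact ⟨x₀, hx₀, h⟩
      · exact ⟨-x₀, by simpa using hx₀, by simpa using h⟩
    set w : E := (4 * C) • z₀ with hw
    have hwball : A w ≤ M := by
      refine hM ⟨w, ?_, rfl⟩
      simp only [Metric.mem_closedBall, dist_zero_right, hw, norm_smul, Real.norm_eq_abs,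
        abs_of_pos (by linarith : (0:ℝ) < 4 * C)]
      nlinarith [norm_nonneg z₀]
    have hle : y w - A w ≤ ⨆ x : E, (y x - A x) := le_ciSup (hbdd y) w
    have hyw : y w = (4 * C) * y z₀ := by simp [hw]
    nlinarith
end

section
/- Let E be a finite-dimensional real normed space and A : E → ℝ convex and superlinear. Then for every y in the dual E*, the supremum defining the Fenchel transform B(y) = sup_x (⟨y,x⟩ − A(x)) is attained at some point x ∈ E; that is, the Legendre transform set L(y) := { x ∈ E : A(x) + B(y) = ⟨y,x⟩ } is nonempty. -/
/-- The supremum defining the Fenchel transform is attained: the Legendre transform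
set of any dual point is nonempty. -/
theorem stmt_1 {E : Type*} [NormedAddCommGroup E] [NormedSpace ℝ E] [FiniteDimensional ℝ E]
    (A : E → ℝ) (hconv : ConvexOn ℝ Set.univ A)
    (hsup : ∀ C > (0:ℝ), ∃ R : ℝ, ∀ x : E, R ≤ ‖x‖ → C * ‖x‖ ≤ A x)
    (y : E →L[ℝ] ℝ) :
    ∃ x : E, A x + (⨆ x' : E, (y x' - A x')) = y x := by
  set f : E → ℝ := fun x => y x - A x with hf
  have hAc : Continuous A := hconv.locallyLipschitz.continuous
  have hfc : Continuous f := (y.continuous).sub hAc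
  obtain ⟨R, hR⟩ := hsup (‖y‖ + 1) (by positivity)
  set R' : ℝ := max R (max (A 0) 1) with hR'
  -- outside ball of radius R', f x ≤ f 0
  have hout : ∀ x : E, R' ≤ ‖x‖ → f x ≤ f 0 := by
    intro x hx
    have h1 : (‖y‖ + 1) * ‖x‖ ≤ A x := hR x (le_trans (le_max_left _ _) hx)
    have h2 : y x ≤ ‖y‖ * ‖x‖ := le_trans (le_abs_self _) (y.le_opNorm x)
    have h3 : A 0 ≤ ‖x‖ := le_trans (le_trans (le_max_left _ _) (le_max_right R _)) hx
    simp only [hf, map_zero]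
    nlinarith
  have hball : IsCompact (Metric.closedBall (0:E) R') := isCompact_closedBall 0 R'
  have hR'pos : (0:ℝ) ≤ R' :=
    le_trans (by linarith [le_max_right (A 0) 1] : (0:ℝ) ≤ max (A 0) 1) (le_max_right R _)
  have hne : (Metric.closedBall (0:E) R').Nonempty :=
    ⟨0, by simpa [Metric.mem_closedBall] using hR'pos⟩
  obtain ⟨x0, hx0mem, hx0⟩ := hball.exists_isMaxOn hne hfc.continuousOn
  have hmax : ∀ x : E, f x ≤ f x0 := by
    intro x
    by_cases h : ‖x‖ ≤ R'
    · exact hx0 (by simpa [Metric.mem_closedBall, dist_zero_right] using h)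
    · exact le_trans (hout x (le_of_not_ge h))
        (hx0 (by simpa [Metric.mem_closedBall] using hR'pos))
  have hsup_eq : (⨆ x' : E, (y x' - A x')) = f x0 := by
    apply le_antisymm
    · exact ciSup_le hmax
    · exact le_ciSup ⟨f x0, fun r ⟨x, hx⟩ => hx ▸ hmax x⟩ x0
  refine ⟨x0, ?_⟩
  have : (⨆ x' : E, (y x' - A x')) = y x0 - A x0 := hsup_eq
  rw [this]; ring
end

section
/- Let E be a finite-dimensional real normed space, A : E → ℝ convex and superlinear, B its Fenchel transform. For every y ∈ E*, the Legendre transform L(y) = { x ∈ E : A(x) + B(y) = ⟨y,x⟩ } is a compact convex subset of E. -/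
/-!
The function `x ↦ y x - A x` is concave and continuous, and superlinearity of `A` makes it tend
to `-∞` at infinity; in particular it is bounded above, so `B(y)` is a genuine supremum. Since
`y x - A x ≤ B(y)` everywhere, `L(y)` is the superlevel set `{x | B(y) ≤ y x - A x}`, which is
convex by concavity and compact because the function tends to `-∞` along the cocompact filter.
-/

open Filter Set Topology

theorem Continuous.isCompact_setOf_le_of_tendsto_cocompact_atBot {X α : Type*} [TopologicalSpace X]
    [TopologicalSpace α] [Preorder α] [ClosedIciTopology α] [NoMinOrder α] {f : X → α}
    (hf : Continuous f) (hlim : Tendsto f (cocompact X) atBot) (c : α) :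
    IsCompact {x | c ≤ f x} := by
  obtain ⟨K, hK, hKc⟩ := mem_cocompact.1 (hlim (Iio_mem_atBot c))
  refine hK.of_isClosed_subset (isClosed_Ici.preimage hf) fun x hx => ?_
  by_contra hxK
  exact (lt_irrefl _) (lt_of_lt_of_le (hKc hxK) hx)

theorem tendsto_clm_sub_cobounded_atBot_of_superlinear {E : Type*} [SeminormedAddCommGroup E]
    [NormedSpace ℝ E] {A : E → ℝ} (hsup : ∀ C > (0:ℝ), ∃ R : ℝ, ∀ x : E, R ≤ ‖x‖ → C * ‖x‖ ≤ A x)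
    (y : E →L[ℝ] ℝ) : Tendsto (fun x => y x - A x) (Bornology.cobounded E) atBot := by
  obtain ⟨R, hR⟩ := hsup (‖y‖ + 1) (by positivity)
  refine tendsto_neg_atTop_iff.1 (tendsto_atTop_mono' _ ?_ tendsto_norm_cobounded_atTop)
  filter_upwards [tendsto_norm_cobounded_atTop.eventually (eventually_ge_atTop R)] with x hx
  have hyx : y x ≤ ‖y‖ * ‖x‖ := (le_abs_self _).trans (y.le_opNorm x)
  have hAx := hR x hx
  linarith

/-- The Legendre transform of a dual point is compact and convex. -/
theorem stmt_3 {E : Type*} [NormedAddCommGroup E] [NormedSpace ℝ E] [FiniteDimensional ℝ E]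
    (A : E → ℝ) (hconv : ConvexOn ℝ Set.univ A)
    (hsup : ∀ C > (0:ℝ), ∃ R : ℝ, ∀ x : E, R ≤ ‖x‖ → C * ‖x‖ ≤ A x)
    (y : E →L[ℝ] ℝ) :
    IsCompact {x : E | A x + (⨆ x' : E, (y x' - A x')) = y x} ∧
    Convex ℝ {x : E | A x + (⨆ x' : E, (y x' - A x')) = y x} := by
  set f : E → ℝ := fun x => y x - A x with hf_def
  have hf : Continuous f := y.continuous.sub (continuousOn_univ.1 (hconv.continuousOn isOpen_univ))
  have hlim : Tendsto f (cocompact E) atBot :=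
    Metric.cobounded_eq_cocompact (α := E) ▸ tendsto_clm_sub_cobounded_atBot_of_superlinear hsup y
  obtain ⟨x₀, hx₀⟩ := hf.exists_forall_ge hlim
  have hbdd : BddAbove (range f) := ⟨f x₀, forall_mem_range.2 hx₀⟩
  have hL : {x | A x + ⨆ x', f x' = y x} = {x | ⨆ x', f x' ≤ f x} := by
    ext x
    have hfenchel : f x ≤ ⨆ x', f x' := le_ciSup hbdd x
    simp only [mem_ofPred_eq, hf_def] at hfenchel ⊢
    constructor <;> intro h <;> linarith
  have hconcave : ConcaveOn ℝ univ f := (y.toLinearMap.concaveOn convex_univ).sub hconv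
  rw [hL]
  refine ⟨hf.isCompact_setOf_le_of_tendsto_cocompact_atBot hlim _, ?_⟩
  simpa only [mem_univ, true_and] using hconcave.convex_ge (⨆ x', f x')
end

section
/- Let E be a finite-dimensional real normed space, A : E → ℝ convex and superlinear, B its Fenchel transform. Let F be a convex subset of E on which A is affine and such that F is contained in L_A(y₀) := { x : A(x) + B(y₀) = ⟨y₀,x⟩ } for some y₀ ∈ E* (F is a flat of A). Let x₀ be a point in the relative interior of F. Then the set 𝓕(F) := { y ∈ E* : ∀ x ∈ F, A(x) + B(y) = ⟨y,x⟩ } equals the Legendre transform of x₀, i.e. 𝓕(F) = { y ∈ E* : A(x₀) + B(y) = ⟨y,x₀⟩ }. -/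
/-! Superlinearity makes the supremum defining `B y` finite, so Fenchel–Young gives
`y x - A x ≤ B y` for every `x`, with equality at `x₀` when `A x₀ + B y = y x₀`. On `F` the
function `y - A` is affine, and an affine function maximised over `F` at a relative interior
point is constant on `F`: the segment from any `x ∈ F` to `x₀` extends a little beyond `x₀`
inside `F`, so a strict increase from `x` to `x₀` would continue past the maximum. -/

open Set Filter Topology

section intrinsicInterior

variable {E : Type*} [NormedAddCommGroup E] [NormedSpace ℝ E]

theorem exists_pos_add_smul_sub_mem_of_mem_intrinsicInterior {F : Set E} {x₀ x : E}
    (hx₀ : x₀ ∈ intrinsicInterior ℝ F) (hx : x ∈ F) :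
    ∃ s : ℝ, 0 < s ∧ x₀ + s • (x₀ - x) ∈ F := by
  obtain ⟨z, hz, rfl⟩ := mem_intrinsicInterior.mp hx₀
  have hmem (t : ℝ) : (z : E) + t • ((z : E) - x) ∈ affineSpan ℝ F := by
    simpa [vsub_eq_sub, vadd_eq_add, add_comm] using
      (affineSpan ℝ F).smul_vsub_vadd_mem t z.2 (subset_affineSpan ℝ F hx) z.2
  let line : ℝ → affineSpan ℝ F := fun t ↦ ⟨(z : E) + t • ((z : E) - x), hmem t⟩
  have hline : Continuous line := by fun_prop
  have hnear : ∀ᶠ t in 𝓝 0, line t ∈ interior ((↑) ⁻¹' F) :=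
    hline.continuousAt.preimage_mem_nhds (by simpa [line] using isOpen_interior.mem_nhds hz)
  obtain ⟨s, hs, hspos⟩ := ((hnear.filter_mono nhdsWithin_le_nhds).and
    (self_mem_nhdsWithin : Ioi (0 : ℝ) ∈ 𝓝[>] 0)).exists
  exact ⟨s, hspos, interior_subset (s := ((↑) : affineSpan ℝ F → E) ⁻¹' F) hs⟩

theorem LinearMap.eq_of_isMaxOn_of_mem_intrinsicInterior {F : Set E} {x₀ x : E}
    (φ : E →ₗ[ℝ] ℝ) (hmax : IsMaxOn φ F x₀) (hx₀ : x₀ ∈ intrinsicInterior ℝ F) (hx : x ∈ F) :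
    φ x = φ x₀ := by
  obtain ⟨s, hspos, hbeyond⟩ := exists_pos_add_smul_sub_mem_of_mem_intrinsicInterior hx₀ hx
  have hle : φ (x₀ + s • (x₀ - x)) ≤ φ x₀ := hmax hbeyond
  rw [map_add, map_smul, map_sub, smul_eq_mul] at hle
  exact le_antisymm (hmax hx) (le_of_mul_le_mul_left (by linarith) hspos)

end intrinsicInterior

theorem bddAbove_range_sub_of_superlinear {E : Type*} [NormedAddCommGroup E] [NormedSpace ℝ E]
    [ProperSpace E] {A : E → ℝ} (hA : Continuous A)
    (hsup : ∀ C > (0:ℝ), ∃ R : ℝ, ∀ x : E, R ≤ ‖x‖ → C * ‖x‖ ≤ A x) (y : E →L[ℝ] ℝ) :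
    BddAbove (range fun x ↦ y x - A x) := by
  obtain ⟨R, hR⟩ := hsup (‖y‖ + 1) (by positivity)
  obtain ⟨M, hM⟩ := (isCompact_closedBall (0 : E) R).bddAbove_image
    (f := fun x ↦ y x - A x) (by fun_prop)
  refine ⟨max M 0, ?_⟩
  rintro _ ⟨x, rfl⟩
  rcases le_or_gt R ‖x‖ with hfar | hnear
  · have hyx : y x ≤ ‖y‖ * ‖x‖ := (le_abs_self _).trans (y.le_opNorm x)
    have hAx := hR x hfar
    exact le_max_of_le_right (by nlinarith [norm_nonneg x])
  · exact le_max_of_le_left (hM ⟨x, by simpa using hnear.le, rfl⟩)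

theorem stmt_5_general {E : Type*} [NormedAddCommGroup E] [NormedSpace ℝ E] [FiniteDimensional ℝ E]
    (A : E → ℝ) (hconv : ConvexOn ℝ Set.univ A)
    (hsup : ∀ C > (0:ℝ), ∃ R : ℝ, ∀ x : E, R ≤ ‖x‖ → C * ‖x‖ ≤ A x)
    (B : (E →L[ℝ] ℝ) → ℝ) (hB : ∀ y : E →L[ℝ] ℝ, B y = ⨆ x : E, (y x - A x))
    (F : Set E)
    (haff : ∃ (l : E →ₗ[ℝ] ℝ) (c : ℝ), ∀ x ∈ F, A x = l x + c)
    (x₀ : E) (hx₀ : x₀ ∈ intrinsicInterior ℝ F) :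
    {y : E →L[ℝ] ℝ | ∀ x ∈ F, A x + B y = y x} =
      {y : E →L[ℝ] ℝ | A x₀ + B y = y x₀} := by
  have hA : Continuous A := continuousOn_univ.mp (hconv.continuousOn isOpen_univ)
  have fenchelYoung (y : E →L[ℝ] ℝ) (x : E) : y x - A x ≤ B y :=
    hB y ▸ le_ciSup (bddAbove_range_sub_of_superlinear hA hsup y) x
  have hx₀F : x₀ ∈ F := intrinsicInterior_subset hx₀
  obtain ⟨l, c, hl⟩ := haff
  ext y
  refine ⟨fun h ↦ h x₀ hx₀F, fun (h : A x₀ + B y = y x₀) x hx ↦ ?_⟩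
  have hφ : ∀ x ∈ F, ((y : E →ₗ[ℝ] ℝ) - l) x = y x - A x + c := fun x hx ↦ by
    simp only [LinearMap.sub_apply, ContinuousLinearMap.coe_coe, hl x hx]
    ring
  have hmax : IsMaxOn ((y : E →ₗ[ℝ] ℝ) - l) F x₀ := fun x hx ↦ by
    simp only [mem_ofPred_eq, hφ x hx, hφ x₀ hx₀F]
    linarith [fenchelYoung y x]
  have hconst := LinearMap.eq_of_isMaxOn_of_mem_intrinsicInterior _ hmax hx₀ hx
  rw [hφ x hx, hφ x₀ hx₀F] at hconst
  linarith

/-- For a flat `F` of a convex superlinear function `A` and a point `x₀` in its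
relative interior, the set of dual points in Fenchel equality with all of `F`
equals the Legendre transform of `x₀`. -/
theorem stmt_5 {E : Type*} [NormedAddCommGroup E] [NormedSpace ℝ E] [FiniteDimensional ℝ E]
    (A : E → ℝ) (hconv : ConvexOn ℝ Set.univ A)
    (hsup : ∀ C > (0:ℝ), ∃ R : ℝ, ∀ x : E, R ≤ ‖x‖ → C * ‖x‖ ≤ A x)
    (B : (E →L[ℝ] ℝ) → ℝ) (hB : ∀ y : E →L[ℝ] ℝ, B y = ⨆ x : E, (y x - A x))
    (F : Set E) (hFconv : Convex ℝ F)
    (haff : ∃ (l : E →ₗ[ℝ] ℝ) (c : ℝ), ∀ x ∈ F, A x = l x + c)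
    (y₀ : E →L[ℝ] ℝ) (hF : F ⊆ {x : E | A x + B y₀ = y₀ x})
    (x₀ : E) (hx₀ : x₀ ∈ intrinsicInterior ℝ F) :
    {y : E →L[ℝ] ℝ | ∀ x ∈ F, A x + B y = y x} =
      {y : E →L[ℝ] ℝ | A x₀ + B y = y x₀} :=
  stmt_5_general A hconv hsup B hB F haff x₀ hx₀
end

section
/- Let E be a finite-dimensional real normed space, A : E → ℝ convex superlinear, B its Fenchel transform. Let x₀ ∈ E, let I be an index set, and for each i ∈ I let F_i be a flat of A containing x₀ such that x₀ lies in the relative interior of F_i for all i, except possibly one index i₀. Then there exists a flat F of A (namely a set of the form { x : A(x) + B(y) = ⟨y,x⟩ } for some y ∈ E*) containing F_i for all i ∈ I. -/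
/-!
Separating the open strict epigraph of `A` from the supporting affine subspace of `F i₀` by
Hahn–Banach gives a hyperplane which is not vertical, since the subspace meets the graph. Normalising
it yields `y` with `y - A ≤ k` everywhere and `y - A = k` on `F i₀`, so that `B y = k` (attained at
`x₀`). On any other flat `F i` the function `A`, hence `y - A`, is affine on segments; as `y - A`
attains its maximum `k` at the relative interior point `x₀`, it equals `k` on all of `F i`.
-/

/-- A flat of `A` : projection to `E` of the intersection of the graph of `A`
with an affine subspace meeting the graph but not the open epigraph. -/
def IsFlat {E : Type*} [NormedAddCommGroup E] [NormedSpace ℝ E]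
    (A : E → ℝ) (F : Set E) : Prop :=
  ∃ V : AffineSubspace ℝ (E × ℝ),
    (∃ p ∈ V, p.2 = A p.1) ∧
    (∀ p ∈ (V : Set (E × ℝ)), ¬ A p.1 < p.2) ∧
    F = {x : E | (x, A x) ∈ V}

open Set Topology

section

variable {E : Type*} [NormedAddCommGroup E] [NormedSpace ℝ E]

theorem exists_mem_openSegment_of_mem_intrinsicInterior {s : Set E} {x₀ x : E}
    (hx₀ : x₀ ∈ intrinsicInterior ℝ s) (hx : x ∈ s) : ∃ z ∈ s, x₀ ∈ openSegment ℝ x z := by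
  obtain ⟨x₀', hx₀'int, rfl⟩ := mem_intrinsicInterior.1 hx₀
  -- extend the segment from `x` through `x₀` slightly beyond `x₀`, inside `affineSpan ℝ s`
  let γ : ℝ → affineSpan ℝ s := fun t =>
    ⟨AffineMap.lineMap x (x₀' : E) (1 + t),
      AffineMap.lineMap_mem _ (subset_affineSpan ℝ s hx) x₀'.2⟩
  have hγ : Continuous γ := by
    refine Continuous.subtype_mk ?_ _
    simp only [AffineMap.lineMap_apply_module']
    fun_prop
  have hγ0 : γ 0 = x₀' := Subtype.ext (by simp [γ])
  have hev : ∀ᶠ t in 𝓝[>] 0, γ t ∈ interior (Subtype.val ⁻¹' s) :=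
    nhdsWithin_le_nhds <| hγ.continuousAt.preimage_mem_nhds <|
      hγ0 ▸ isOpen_interior.mem_nhds hx₀'int
  obtain ⟨t, ht, htpos : (0 : ℝ) < t⟩ := (hev.and self_mem_nhdsWithin).exists
  refine ⟨γ t, (interior_subset ht : γ t ∈ Subtype.val ⁻¹' s), ?_⟩
  rw [openSegment_eq_image_lineMap]
  refine ⟨(1 + t)⁻¹, ⟨by positivity, inv_lt_one_of_one_lt₀ (by linarith)⟩, ?_⟩
  simp [γ, inv_mul_cancel₀ (by positivity : (1 : ℝ) + t ≠ 0)]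

variable {A : E → ℝ} {F : Set E}

theorem IsFlat.apply_smul_add_smul (hF : IsFlat A F) (hA : ConvexOn ℝ univ A) {x z : E}
    (hx : x ∈ F) (hz : z ∈ F) {a b : ℝ} (ha : 0 ≤ a) (hb : 0 ≤ b) (hab : a + b = 1) :
    A (a • x + b • z) = a * A x + b * A z := by
  obtain ⟨V, -, hV, rfl⟩ := hF
  have hmem : a • ((x, A x) : E × ℝ) + b • (z, A z) ∈ V := V.convex hx hz ha hb hab
  have hge : a * A x + b * A z ≤ A (a • x + b • z) := by simpa using hV _ hmem
  exact le_antisymm (hA.2 trivial trivial ha hb hab) hge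

theorem IsFlat.exists_supporting_functional (hF : IsFlat A F) (hA : ConvexOn ℝ univ A)
    (hAc : Continuous A) :
    ∃ (y : E →L[ℝ] ℝ) (k : ℝ), (∀ x, y x - A x ≤ k) ∧ ∀ x ∈ F, y x - A x = k := by
  obtain ⟨V, ⟨p, hpV, hpA⟩, hV, rfl⟩ := hF
  have hS : IsOpen {q : E × ℝ | q.1 ∈ univ ∧ A q.1 < q.2} := by
    simpa using isOpen_lt (hAc.comp continuous_fst) continuous_snd
  obtain ⟨f, c, hfS, hfV⟩ := geometric_hahn_banach_open hA.convex_strict_epigraph hS V.convex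
    (disjoint_left.2 fun q hqS hqV => hV q hqV hqS.2)
  set u := f.comp (.inl ℝ E ℝ)
  set β := f (0, 1)
  have hf : ∀ q : E × ℝ, f q = u q.1 + q.2 * β := fun q => by
    have hq : q = (q.1, 0) + q.2 • ((0 : E), (1 : ℝ)) := by ext <;> simp
    conv_lhs => rw [hq, map_add, map_smul]
    rfl
  have hβ : β < 0 := by
    have hlt := hfS (p.1, p.2 + 1) ⟨trivial, by linarith⟩
    have hge := hfV p hpV
    rw [hf] at hlt hge
    simp only at hlt
    linarith
  have hle : ∀ x, u x + A x * β ≤ c := fun x => by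
    refine le_of_forall_pos_lt_add fun ε hε => ?_
    have hδ : 0 < ε / -β := div_pos hε (neg_pos.2 hβ)
    have hlt := hfS (x, A x + ε / -β) ⟨trivial, by simpa using hδ⟩
    have hεβ : ε / -β * β = -ε := by field_simp [hβ.ne]
    rw [hf] at hlt
    simp only at hlt
    linarith
  have hnorm : ∀ x, ((-β)⁻¹ • u) x - A x = (u x + A x * β) / -β := fun x => by
    simp only [FunLike.coe_smul, Pi.smul_apply, smul_eq_mul]
    field_simp [hβ.ne]
    ring
  refine ⟨(-β)⁻¹ • u, c / -β, fun x => ?_, fun x hx => ?_⟩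
  · rw [hnorm]
    exact div_le_div_of_nonneg_right (hle x) (by linarith)
  · rw [hnorm, le_antisymm (hle x) (by simpa [hf] using hfV _ hx)]

theorem IsFlat.sub_eq_of_mem_intrinsicInterior (hF : IsFlat A F) (hA : ConvexOn ℝ univ A)
    {x₀ : E} (hx₀ : x₀ ∈ intrinsicInterior ℝ F) {y : E →L[ℝ] ℝ} {k : ℝ}
    (hle : ∀ x, y x - A x ≤ k) (hk : y x₀ - A x₀ = k) {x : E} (hx : x ∈ F) :
    y x - A x = k := by
  obtain ⟨z, hz, a, b, ha, hb, hab, rfl⟩ :=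
    exists_mem_openSegment_of_mem_intrinsicInterior hx₀ hx
  rw [hF.apply_smul_add_smul hA hx hz ha.le hb.le hab, map_add, map_smul, map_smul,
    smul_eq_mul, smul_eq_mul] at hk
  have hkz : b * (y z - A z) ≤ b * k := mul_le_mul_of_nonneg_left (hle z) hb.le
  have hsplit : a * k + b * k = k := by rw [← add_mul, hab, one_mul]
  refine le_antisymm (hle x) (le_of_mul_le_mul_left ?_ ha)
  linarith

end

theorem stmt_6_general {E : Type*} [NormedAddCommGroup E] [NormedSpace ℝ E] [FiniteDimensional ℝ E]
    (A : E → ℝ) (hconv : ConvexOn ℝ Set.univ A)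
    (B : (E →L[ℝ] ℝ) → ℝ) (hB : ∀ y : E →L[ℝ] ℝ, B y = ⨆ x : E, (y x - A x))
    {I : Type*} (F : I → Set E) (hflat : ∀ i, IsFlat A (F i))
    (x₀ : E) (hx₀ : ∀ i, x₀ ∈ F i)
    (hri : ∃ i₀ : I, ∀ i, i ≠ i₀ → x₀ ∈ intrinsicInterior ℝ (F i)) :
    ∃ y : E →L[ℝ] ℝ, ∀ i, F i ⊆ {x : E | A x + B y = y x} := by
  obtain ⟨i₀, hri⟩ := hri
  have hAc : Continuous A := continuousOn_univ.1 (hconv.continuousOn isOpen_univ)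
  obtain ⟨y, k, hle, hk⟩ := (hflat i₀).exists_supporting_functional hconv hAc
  have hk₀ : y x₀ - A x₀ = k := hk x₀ (hx₀ i₀)
  have hBy : B y = k := by
    rw [hB]
    exact le_antisymm (ciSup_le hle) (hk₀ ▸ le_ciSup ⟨k, forall_mem_range.2 hle⟩ x₀)
  refine ⟨y, fun i x hx => ?_⟩
  have hyx : y x - A x = k := by
    by_cases hi : i = i₀
    · subst hi
      exact hk x hx
    · exact (hflat i).sub_eq_of_mem_intrinsicInterior hconv (hri i hi) hle hk₀ hx
  show A x + B y = y x
  linarith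

/-- A family of flats all containing `x₀`, all but at most one containing `x₀` in
the relative interior, is contained in a common face. -/
theorem stmt_6 {E : Type*} [NormedAddCommGroup E] [NormedSpace ℝ E] [FiniteDimensional ℝ E]
    (A : E → ℝ) (hconv : ConvexOn ℝ Set.univ A)
    (hsup : ∀ C > (0:ℝ), ∃ R : ℝ, ∀ x : E, R ≤ ‖x‖ → C * ‖x‖ ≤ A x)
    (B : (E →L[ℝ] ℝ) → ℝ) (hB : ∀ y : E →L[ℝ] ℝ, B y = ⨆ x : E, (y x - A x))
    {I : Type*} (F : I → Set E) (hflat : ∀ i, IsFlat A (F i))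
    (x₀ : E) (hx₀ : ∀ i, x₀ ∈ F i)
    (hri : ∃ i₀ : I, ∀ i, i ≠ i₀ → x₀ ∈ intrinsicInterior ℝ (F i)) :
    ∃ y : E →L[ℝ] ℝ, ∀ i, F i ⊆ {x : E | A x + B y = y x} :=
  stmt_6_general A hconv B hB F hflat x₀ hx₀ hri
end

section
/- Let E be a finite-dimensional real normed space, A : E → ℝ convex superlinear, B its Fenchel transform. Let x₀ ∈ E and let (F_i)_{i∈I} be a family of flats of A each containing x₀ in its relative interior. Then there exists a flat F of A containing every F_i and containing x₀ in its relative interior. -/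
open Set Filter Topology AffineMap

section IntrinsicInterior

variable {𝕜 V P : Type*} [Ring 𝕜] [AddCommGroup V] [Module 𝕜 V] [TopologicalSpace P]
  [AddTorsor V P] {s : Set P} {x : P}

theorem mem_intrinsicInterior_iff_eventually :
    x ∈ intrinsicInterior 𝕜 s ↔ x ∈ affineSpan 𝕜 s ∧ ∀ᶠ y in 𝓝[affineSpan 𝕜 s] x, y ∈ s := by
  simp only [mem_intrinsicInterior, mem_interior_iff_mem_nhds]
  constructor
  · rintro ⟨y, hy, rfl⟩
    exact ⟨y.2, mem_of_superset (mem_nhds_subtype_iff_nhdsWithin.1 hy) (image_preimage_subset _ _)⟩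
  · rintro ⟨hx, h⟩
    refine ⟨⟨x, hx⟩, mem_nhds_subtype_iff_nhdsWithin.2 ?_, rfl⟩
    filter_upwards [h, self_mem_nhdsWithin] with y hys hy using ⟨⟨y, hy⟩, hys, rfl⟩

end IntrinsicInterior

section NormedSpace

variable {E : Type*} [NormedAddCommGroup E] [NormedSpace ℝ E]

theorem eventually_lineMap_mem_of_mem_intrinsicInterior {s : Set E} {x y : E}
    (hx : x ∈ intrinsicInterior ℝ s) (hy : y ∈ affineSpan ℝ s) :
    ∀ᶠ t in 𝓝 (0 : ℝ), lineMap x y t ∈ s := by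
  obtain ⟨hxs, h⟩ := mem_intrinsicInterior_iff_eventually.1 hx
  have hlim : Tendsto (lineMap x y : ℝ → E) (𝓝 0) (𝓝[affineSpan ℝ s] x) :=
    tendsto_nhdsWithin_iff.2
      ⟨by simpa using (lineMap_continuous (R := ℝ) (p := x) (q := y)).tendsto 0,
        Eventually.of_forall fun t => lineMap_mem t hxs hy⟩
  exact hlim.eventually h

theorem sub_mem_span_of_mem_affineSpan_insert {x z : E} {S : Set E}
    (hz : z ∈ affineSpan ℝ (insert x S)) : z - x ∈ Submodule.span ℝ ((· -ᵥ x) '' S) := by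
  have h := AffineSubspace.vsub_mem_direction hz (mem_affineSpan ℝ (mem_insert x S))
  rwa [direction_affineSpan, vectorSpan_eq_span_vsub_set_right ℝ (mem_insert x S),
    image_insert_eq, vsub_self, Submodule.span_insert_zero] at h

theorem Convex.eventually_mem_nhdsWithin_affineSpan_insert [FiniteDimensional ℝ E]
    {C S : Set E} {x : E} (hC : Convex ℝ C) (hx : x ∈ C)
    (hS : ∀ y ∈ S, ∀ᶠ t in 𝓝 (0 : ℝ), lineMap x y t ∈ C) :
    ∀ᶠ z in 𝓝[affineSpan ℝ (insert x S)] x, z ∈ C := by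
  obtain ⟨B, hBS, hBspan, hli⟩ := exists_linearIndependent ℝ ((· -ᵥ x) '' S)
  have := hli.setFinite.fintype
  set n := Fintype.card B
  obtain ⟨c, hc⟩ := LinearMap.exists_extend (Module.Basis.span hli).equivFun.toLinearMap
  have hrepr : ∀ z ∈ affineSpan ℝ (insert x S), ∑ j : B, c (z - x) j • (j : E) = z - x := by
    intro z hz
    have hmem : z - x ∈ Submodule.span ℝ (range ((↑) : B → E)) := by
      rw [Subtype.range_coe, hBspan]; exact sub_mem_span_of_mem_affineSpan_insert hz
    have h := congrArg Subtype.val ((Module.Basis.span hli).sum_equivFun ⟨z - x, hmem⟩)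
    have hcz : c (z - x) = (Module.Basis.span hli).equivFun ⟨z - x, hmem⟩ :=
      LinearMap.congr_fun hc ⟨z - x, hmem⟩
    rw [← hcz] at h
    simpa [Module.Basis.coe_span_apply] using h
  have hsmall : ∀ᶠ z in 𝓝 x, ∀ j : B, x + ((n : ℝ) * c (z - x) j) • (j : E) ∈ C := by
    refine eventually_all.2 fun ⟨v, hv⟩ => ?_
    obtain ⟨y, hy, rfl⟩ := hBS hv
    have hlim : Tendsto (fun z => (n : ℝ) * c (z - x) ⟨_, hv⟩) (𝓝 x) (𝓝 0) := by
      have hcont : Continuous c := c.continuous_of_finiteDimensional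
      simpa using ((continuous_apply _).comp (hcont.comp (continuous_sub_right x))).tendsto x
        |>.const_mul (n : ℝ)
    simpa [lineMap_apply_module', add_comm] using hlim.eventually (hS y hy)
  filter_upwards [nhdsWithin_le_nhds hsmall, self_mem_nhdsWithin] with z hzC hzM
  rcases isEmpty_or_nonempty B with hB | hB
  · have hzx := hrepr z hzM
    rw [Finset.univ_eq_empty, Finset.sum_empty, eq_comm, sub_eq_zero] at hzx
    rwa [hzx]
  · have hn : (n : ℝ) ≠ 0 := Nat.cast_ne_zero.2 Fintype.card_ne_zero
    -- `z = x + ∑ cⱼ bⱼ` is the barycentre of the points `x + (n cⱼ) bⱼ` of `C`.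
    have hz : z = ∑ j : B, (n : ℝ)⁻¹ • (x + ((n : ℝ) * c (z - x) j) • (j : E)) := by
      simp only [smul_add, Finset.sum_add_distrib, smul_smul, inv_mul_cancel_left₀ hn,
        hrepr z hzM, Finset.sum_const, Finset.card_univ]
      rw [← Nat.cast_smul_eq_nsmul ℝ, smul_smul, mul_inv_cancel₀ hn, one_smul, add_sub_cancel]
    rw [hz]
    refine hC.sum_mem (fun _ _ => by positivity) ?_ fun j _ => hzC j
    rw [Finset.sum_const, Finset.card_univ, nsmul_eq_mul, mul_inv_cancel₀ hn]

theorem Convex.mem_intrinsicInterior_of_eventually_lineMap_mem [FiniteDimensional ℝ E]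
    {C S : Set E} {x : E} (hC : Convex ℝ C) (hx : x ∈ C)
    (hS : ∀ y ∈ S, ∀ᶠ t in 𝓝 (0 : ℝ), lineMap x y t ∈ C)
    (hCS : C ⊆ affineSpan ℝ (insert x S)) : x ∈ intrinsicInterior ℝ C :=
  mem_intrinsicInterior_iff_eventually.2 ⟨subset_affineSpan ℝ C hx,
    nhdsWithin_mono x (affineSpan_le.2 hCS) (hC.eventually_mem_nhdsWithin_affineSpan_insert hx hS)⟩

theorem ConvexOn.exists_affineMap_le_eq {A : E → ℝ} (hA : ConvexOn ℝ univ A)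
    (hcont : Continuous A) (x₀ : E) :
    ∃ ℓ : E →ᵃ[ℝ] ℝ, (∀ x, ℓ x ≤ A x) ∧ ℓ x₀ = A x₀ := by
  have hopen : IsOpen {p : E × ℝ | A p.1 < p.2} :=
    isOpen_lt (hcont.comp continuous_fst) continuous_snd
  obtain ⟨f, hf⟩ := geometric_hahn_banach_open_point (by simpa using hA.convex_strict_epigraph)
    hopen (x := (x₀, A x₀)) (lt_irrefl (A x₀))
  have hsplit : ∀ x t, f (x, t) = f (x, 0) + t * f (0, 1) := fun x t => by
    rw [← smul_eq_mul, ← map_smul, ← map_add, Prod.smul_mk, smul_zero, smul_eq_mul, mul_one,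
      Prod.mk_add_mk, add_zero, zero_add]
  have hc : f (0, 1) < 0 := by
    have h := hf (x₀, A x₀ + 1) (by simp)
    rw [hsplit, hsplit x₀ (A x₀)] at h
    linarith
  have hgraph : ∀ x, f (x, A x) ≤ f (x₀, A x₀) := fun x =>
    le_of_tendsto ((f.continuous.comp (Continuous.prodMk_right x)).continuousWithinAt
      (s := Ioi (A x))).tendsto (eventually_nhdsWithin_of_forall fun t ht => (hf _ ht).le)
  set g : E →ₗ[ℝ] ℝ := (f : E × ℝ →ₗ[ℝ] ℝ) ∘ₗ LinearMap.inl ℝ E ℝ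
  refine ⟨AffineMap.const ℝ E (A x₀ + (f (0, 1))⁻¹ * g x₀) - ((f (0, 1))⁻¹ • g).toAffineMap,
    fun x => ?_, by simp⟩
  have h := hgraph x
  rw [hsplit, hsplit x₀] at h
  have hslope : (f (0, 1))⁻¹ * (g x₀ - g x) ≤ A x - A x₀ := by
    have hg : f (0, 1) * (A x - A x₀) ≤ g x₀ - g x := by
      change _ ≤ f (x₀, 0) - f (x, 0)
      linarith
    calc (f (0, 1))⁻¹ * (g x₀ - g x) ≤ (f (0, 1))⁻¹ * (f (0, 1) * (A x - A x₀)) :=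
          mul_le_mul_of_nonpos_left hg (inv_nonpos.2 hc.le)
      _ = A x - A x₀ := inv_mul_cancel_left₀ hc.ne _
  simp only [coe_sub, coe_const, LinearMap.coe_toAffineMap, LinearMap.coe_smul, Pi.sub_apply,
    Function.const_apply, Pi.smul_apply, smul_eq_mul]
  linarith

namespace IsFlat

variable {A : E → ℝ} {F : Set E}

theorem convex (hF : IsFlat A F) (hA : ConvexOn ℝ univ A) : Convex ℝ F := by
  obtain ⟨V, -, hV, rfl⟩ := hF
  intro x hx y hy a b ha hb hab
  have hmem := V.convex hx hy ha hb hab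
  have hle : A (a • x + b • y) ≤ a * A x + b * A y := hA.2 trivial trivial ha hb hab
  have hge := hV _ hmem
  simp only [Prod.fst_add, Prod.smul_fst, Prod.snd_add, Prod.smul_snd, smul_eq_mul, not_lt] at hge
  have heq : (a • x + b • y, A (a • x + b • y)) = a • (x, A x) + b • (y, A y) := by
    rw [le_antisymm hle hge]; simp
  change (_, _) ∈ V
  rw [heq]
  exact hmem

theorem eqOn_of_mem_intrinsicInterior (hF : IsFlat A F) {ℓ : E →ᵃ[ℝ] ℝ} (hℓ : ∀ x, ℓ x ≤ A x)
    {x₀ : E} (hx₀ : x₀ ∈ intrinsicInterior ℝ F) (hℓx₀ : ℓ x₀ = A x₀) : EqOn A ℓ F := by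
  intro x hx
  obtain ⟨t, htF, ht⟩ := ((eventually_lineMap_mem_of_mem_intrinsicInterior hx₀
    (subset_affineSpan ℝ F hx)).filter_mono nhdsWithin_le_nhds |>.and
    (self_mem_nhdsWithin (s := Iio 0))).exists
  obtain ⟨V, -, hV, rfl⟩ := hF
  set y := lineMap x₀ x t
  set μ := t / (t - 1)
  have ht1 : t - 1 < 0 := by linarith
  have hμ0 : 0 < μ := div_pos_of_neg_of_neg ht ht1
  have hμ1 : μ < 1 := (div_lt_one_of_neg ht1).2 (by linarith)
  have hx₀eq : lineMap y x μ = x₀ := by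
    simp only [y, μ, lineMap_apply_module]
    match_scalars <;> field_simp [ht1.ne] <;> ring
  have hP := hV _ (lineMap_mem μ htF hx)
  have hℓ' := ℓ.apply_lineMap y x μ
  rw [hx₀eq, hℓx₀] at hℓ'
  simp only [lineMap_apply_module] at hP hℓ' hx₀eq
  simp only [Prod.smul_mk, smul_eq_mul, Prod.mk_add_mk, not_lt] at hP
  rw [hx₀eq] at hP
  rw [smul_eq_mul, smul_eq_mul] at hℓ'
  have hy := mul_nonneg (sub_nonneg.2 hμ1.le) (sub_nonneg.2 (hℓ y))
  have hxℓ : μ * (A x - ℓ x) ≤ 0 := by linarith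
  exact le_antisymm (sub_nonpos.1 (nonpos_of_mul_nonpos_right hxℓ hμ0)) (hℓ x)

end IsFlat

theorem isFlat_setOf_mem_and_eq {A : E → ℝ} {ℓ : E →ᵃ[ℝ] ℝ} (hℓ : ∀ x, ℓ x ≤ A x)
    {M : AffineSubspace ℝ E} {x₀ : E} (hx₀ : x₀ ∈ M) (hℓx₀ : ℓ x₀ = A x₀) :
    IsFlat A {x | x ∈ M ∧ A x = ℓ x} := by
  refine ⟨M.map ((AffineMap.id ℝ E).prod ℓ), ⟨(x₀, A x₀), ⟨x₀, hx₀, by simp [hℓx₀]⟩, rfl⟩, ?_, ?_⟩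
  · rintro _ ⟨x, -, rfl⟩
    simpa using hℓ x
  · ext x
    simp [eq_comm]

end NormedSpace

theorem stmt_7_general {E : Type*} [NormedAddCommGroup E] [NormedSpace ℝ E] [FiniteDimensional ℝ E]
    (A : E → ℝ) (hconv : ConvexOn ℝ Set.univ A)
    {I : Type*} (F : I → Set E) (hflat : ∀ i, IsFlat A (F i))
    (x₀ : E) (hri : ∀ i, x₀ ∈ intrinsicInterior ℝ (F i)) :
    ∃ G : Set E, IsFlat A G ∧ (∀ i, F i ⊆ G) ∧ x₀ ∈ intrinsicInterior ℝ G := by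
  obtain ⟨ℓ, hℓ, hℓx₀⟩ :=
    hconv.exists_affineMap_le_eq (continuousOn_univ.1 (hconv.continuousOn isOpen_univ)) x₀
  set M := affineSpan ℝ (insert x₀ (⋃ i, F i))
  have hx₀M : x₀ ∈ M := subset_affineSpan ℝ _ (mem_insert x₀ _)
  have hFG : ∀ i, F i ⊆ {x | x ∈ M ∧ A x = ℓ x} := fun i x hx =>
    ⟨subset_affineSpan ℝ _ (mem_insert_of_mem x₀ (mem_iUnion_of_mem i hx)),
      (hflat i).eqOn_of_mem_intrinsicInterior hℓ (hri i) hℓx₀ hx⟩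
  have hG := isFlat_setOf_mem_and_eq hℓ hx₀M hℓx₀
  refine ⟨_, hG, hFG, (hG.convex hconv).mem_intrinsicInterior_of_eventually_lineMap_mem
    ⟨hx₀M, hℓx₀.symm⟩ (fun y hy => ?_) fun x hx => hx.1⟩
  obtain ⟨i, hi⟩ := mem_iUnion.1 hy
  exact (eventually_lineMap_mem_of_mem_intrinsicInterior (hri i)
    (subset_affineSpan ℝ _ hi)).mono fun t ht => hFG i ht

/-- A family of flats each containing `x₀` in its relative interior is contained in a
single flat containing `x₀` in its relative interior. -/
theorem stmt_7 {E : Type*} [NormedAddCommGroup E] [NormedSpace ℝ E] [FiniteDimensional ℝ E]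
    (A : E → ℝ) (hconv : ConvexOn ℝ Set.univ A)
    (hsup : ∀ C > (0:ℝ), ∃ R : ℝ, ∀ x : E, R ≤ ‖x‖ → C * ‖x‖ ≤ A x)
    {I : Type*} (F : I → Set E) (hflat : ∀ i, IsFlat A (F i))
    (x₀ : E) (hri : ∀ i, x₀ ∈ intrinsicInterior ℝ (F i)) :
    ∃ G : Set E, IsFlat A G ∧ (∀ i, F i ⊆ G) ∧ x₀ ∈ intrinsicInterior ℝ G :=
  stmt_7_general A hconv F hflat x₀ hri
end

section
/- Let E be a finite-dimensional real normed space, A : E → ℝ convex superlinear, B its Fenchel transform. Take x₀ ∈ E and y ∈ E* with A(x₀) + B(y) = ⟨y,x₀⟩ (i.e. y ∈ L(x₀)). Then any flat F of A containing x₀ in its relative interior satisfies F ⊆ L(y) := { x ∈ E : A(x) + B(y) = ⟨y,x⟩ }. In particular, if x₀ lies in the relative interior of L(y), then L(y) is the largest flat of A containing x₀ in its relative interior. -/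
/-- Any flat containing `x₀` in its relative interior is contained in `L(y)` for any
`y ∈ L(x₀)`; in particular if `x₀` lies in the relative interior of `L(y)`, then
`L(y)` is the largest flat of `A` containing `x₀` in its relative interior. -/
theorem stmt_8 {E : Type*} [NormedAddCommGroup E] [NormedSpace ℝ E] [FiniteDimensional ℝ E]
    (A : E → ℝ) (hconv : ConvexOn ℝ Set.univ A)
    (hsup : ∀ C > (0:ℝ), ∃ R : ℝ, ∀ x : E, R ≤ ‖x‖ → C * ‖x‖ ≤ A x)
    (B : (E →L[ℝ] ℝ) → ℝ) (hB : ∀ y : E →L[ℝ] ℝ, B y = ⨆ x : E, (y x - A x))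
    (x₀ : E) (y : E →L[ℝ] ℝ) (hy : A x₀ + B y = y x₀) :
    (∀ F : Set E, IsFlat A F → x₀ ∈ intrinsicInterior ℝ F →
      F ⊆ {x : E | A x + B y = y x}) ∧
    (x₀ ∈ intrinsicInterior ℝ {x : E | A x + B y = y x} →
      IsFlat A {x : E | A x + B y = y x}) := by
  -- A is continuous
  have hAcont : Continuous A := by
    exact continuousOn_univ.mp (hconv.continuousOn isOpen_univ)
  -- the sup defining B y is attained below B y
  have hle : ∀ x : E, y x - A x ≤ B y := by
    obtain ⟨R, hR⟩ := hsup (‖y‖ + 1) (by positivity)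
    set M : ℝ := max R 0 with hM
    have hMR : R ≤ M := le_max_left _ _
    have hM0 : (0:ℝ) ≤ M := le_max_right _ _
    obtain ⟨m, hm⟩ : ∃ m, ∀ x ∈ Metric.closedBall (0:E) M, m ≤ A x := by
      obtain ⟨xm, _, hxm⟩ := (isCompact_closedBall (0:E) M).exists_isMinOn
        ⟨0, by simp [hM0]⟩ hAcont.continuousOn
      exact ⟨A xm, fun x hx => hxm hx⟩
    have hbdd : BddAbove (Set.range fun x : E => y x - A x) := by
      refine ⟨max 0 (‖y‖ * M - m), ?_⟩
      rintro _ ⟨x, rfl⟩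
      have hyx : y x ≤ ‖y‖ * ‖x‖ := (le_abs_self _).trans (y.le_opNorm x)
      rcases le_or_gt ‖x‖ M with h | h
      · have : m ≤ A x := hm x (by simpa [Metric.mem_closedBall, dist_zero_right] using h)
        have : y x - A x ≤ ‖y‖ * M - m := by
          have := mul_le_mul_of_nonneg_left h (norm_nonneg y)
          linarith
        exact this.trans (le_max_right _ _)
      · have hA : (‖y‖ + 1) * ‖x‖ ≤ A x := hR x (hMR.trans h.le)
        have : y x - A x ≤ 0 := by nlinarith [norm_nonneg x]
        exact this.trans (le_max_left _ _)
    intro x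
    rw [hB]
    exact le_ciSup hbdd x
  constructor
  · rintro F ⟨V, -, hsupp, hFeq⟩ hx₀int x hx
    have hx₀F : x₀ ∈ F := intrinsicInterior_subset hx₀int
    -- convexity/affinity on the flat
    have hseg : ∀ x1 ∈ F, ∀ x2 ∈ F, ∀ t : ℝ, 0 ≤ t → t ≤ 1 →
        t • x1 + (1-t) • x2 ∈ F ∧ A (t • x1 + (1-t) • x2) = t * A x1 + (1-t) * A x2 := by
      intro x1 h1 x2 h2 t ht0 ht1
      have h1V : (x1, A x1) ∈ V := by rwa [hFeq] at h1
      have h2V : (x2, A x2) ∈ V := by rwa [hFeq] at h2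
      have hq : t • ((x1, A x1) -ᵥ (x2, A x2)) +ᵥ (x2, A x2) ∈ V :=
        V.smul_vsub_vadd_mem t h1V h2V h2V
      have hqe : t • ((x1, A x1) -ᵥ (x2, A x2)) +ᵥ (x2, A x2)
          = (t • x1 + (1-t) • x2, t * A x1 + (1-t) * A x2) := by
        simp [vsub_eq_sub, vadd_eq_add, Prod.ext_iff, smul_sub, sub_smul, one_smul,
          smul_eq_mul]
        constructor
        · abel
        · ring
      rw [hqe] at hq
      have hub := hsupp _ hq
      push_neg at hub
      have hconvle := hconv.2 (Set.mem_univ x1) (Set.mem_univ x2) ht0 (by linarith)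
        (by ring : t + (1-t) = 1)
      simp only [smul_eq_mul] at hconvle hub
      have hAeq : A (t • x1 + (1-t) • x2) = t * A x1 + (1-t) * A x2 :=
        le_antisymm hconvle hub
      refine ⟨?_, hAeq⟩
      rw [hFeq]
      show ((t • x1 + (1-t) • x2 : E), A (t • x1 + (1-t) • x2)) ∈ V
      rw [hAeq]; exact hq
    -- find point z beyond x₀ on ray from x
    haveI : Nonempty (affineSpan ℝ F) := ⟨⟨x₀, subset_affineSpan ℝ F hx₀F⟩⟩
    obtain ⟨u, hu, hux⟩ := mem_intrinsicInterior.mp hx₀int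
    set v : affineSpan ℝ F := ⟨x, subset_affineSpan ℝ F hx⟩ with hv
    obtain ⟨ε, hε, hball⟩ := Metric.mem_nhds_iff.mp (mem_interior_iff_mem_nhds.mp hu)
    set w := u -ᵥ v with hw
    set δ : ℝ := ε / (2 * (‖w‖ + 1)) with hδ
    have hwn : (0:ℝ) ≤ ‖w‖ := norm_nonneg _
    have hδ0 : 0 < δ := by positivity
    set z : affineSpan ℝ F := (δ • w) +ᵥ u with hz
    have hzu : dist z u < ε := by
      rw [hz, dist_vadd_left, norm_smul, Real.norm_eq_abs, abs_of_pos hδ0, hδ]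
      rw [div_mul_eq_mul_div, div_lt_iff₀ (by positivity)]
      nlinarith
    have hzF : (z : E) ∈ F := by
      exact hball (Metric.mem_ball.mpr hzu)
    have hzc : (z : E) = δ • (x₀ - x) + x₀ := by
      rw [hz]
      push_cast [AffineSubspace.coe_vadd, AffineSubspace.coe_vsub]
      rw [hw]
      simp [AffineSubspace.coe_vsub, vadd_eq_add, vsub_eq_sub, hux, hv]
    set t : ℝ := δ / (1 + δ) with hts
    have h1δ : (0:ℝ) < 1 + δ := by linarith
    have ht0 : 0 < t := by positivity
    have ht1 : t < 1 := by rw [hts, div_lt_one h1δ]; linarith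
    have hcomb : t • x + (1-t) • (z : E) = x₀ := by
      rw [hzc]
      match_scalars <;> (rw [hts]; field_simp; try ring)
    obtain ⟨-, hAaff⟩ := hseg x hx (z : E) hzF t ht0.le ht1.le
    rw [hcomb] at hAaff
    have hx_ge : y x - A x ≤ B y := hle x
    have hz_ge : y (z:E) - A (z:E) ≤ B y := hle (z:E)
    have hyx₀ : y x₀ = t * y x + (1-t) * y (z:E) := by
      rw [← hcomb]; simp [map_add, map_smul]
    have : A x + B y ≤ y x := by nlinarith
    exact le_antisymm this (by linarith [hle x])
  · intro hx₀int
    refine ⟨⟨{p : E × ℝ | p.2 = y p.1 - B y}, ?_⟩, ⟨(x₀, A x₀), ?_, rfl⟩, ?_, ?_⟩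
    · intro c p1 p2 p3 h1 h2 h3
      simp only [Set.mem_setOf_eq] at h1 h2 h3 ⊢
      simp only [vsub_eq_sub, vadd_eq_add, Prod.fst_sub, Prod.snd_sub, Prod.smul_fst,
        Prod.smul_snd, Prod.fst_add, Prod.snd_add, smul_eq_mul, map_add, map_smul, map_sub]
      rw [h1, h2, h3]; ring
    · show A x₀ = y x₀ - B y
      linarith
    · rintro ⟨px, pt⟩ hp
      have hp' : pt = y px - B y := hp
      simp only [not_lt]
      have := hle px
      linarith
    · ext x
      simp only [Set.mem_setOf_eq]
      constructor
      · intro h; show A x = y x - B y; linarith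
      · intro h; have : A x = y x - B y := h; linarith
end

section
/- Let E be a finite-dimensional real inner product space, A : E → ℝ convex superlinear with Fenchel transform B, and T a linear involution of E with A∘T = A. Suppose h ∈ E satisfies T h = h, and y ∈ E* satisfies the A-Fenchel equality B(y) + A(h) = ⟨y, h⟩ (y ∈ L(h)). Then y₁ := (y + T* y)/2 also satisfies B(y₁) + A(h) = ⟨y₁, h⟩, and moreover B(y₁) = B(y). -/
open RealInnerProductSpace

section Aux

variable {E : Type*} [NormedAddCommGroup E] [InnerProductSpace ℝ E]
    [FiniteDimensional ℝ E]

lemma bdd_aux (A : E → ℝ) (hconv : ConvexOn ℝ Set.univ A)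
    (hsup : ∀ C > (0:ℝ), ∃ R : ℝ, ∀ x : E, R ≤ ‖x‖ → C * ‖x‖ ≤ A x)
    (y : E) : BddAbove (Set.range fun x : E => ⟪y, x⟫ - A x) := by
  obtain ⟨R, hR⟩ := hsup (‖y‖ + 1) (by positivity)
  set R' := max R 0 with hR'
  have hcont : ContinuousOn A (Set.univ : Set E) :=
    hconv.continuousOn isOpen_univ
  have hA : Continuous A := continuousOn_univ.mp hcont
  obtain ⟨x₀, hx₀mem, hx₀⟩ := (isCompact_closedBall (0:E) R').exists_isMinOn
    ⟨0, by simp [hR']⟩ (hA.continuousOn)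
  refine ⟨max (‖y‖ * R' - A x₀) 0, ?_⟩
  rintro _ ⟨x, rfl⟩
  dsimp only
  rcases le_or_gt ‖x‖ R' with hx | hx
  · have h1 : ⟪y, x⟫ ≤ ‖y‖ * R' := by
      calc ⟪y, x⟫ ≤ ‖y‖ * ‖x‖ := real_inner_le_norm y x
        _ ≤ ‖y‖ * R' := by apply mul_le_mul_of_nonneg_left hx (norm_nonneg _)
    have h2 : A x₀ ≤ A x := hx₀ (by simpa [Metric.mem_closedBall] using hx)
    exact le_max_of_le_left (by linarith)
  · have hRx : R ≤ ‖x‖ := le_trans (le_max_left _ _) hx.le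
    have h1 := hR x hRx
    have h2 : ⟪y, x⟫ ≤ ‖y‖ * ‖x‖ := real_inner_le_norm y x
    have h3 : (0:ℝ) ≤ ‖x‖ := norm_nonneg _
    refine le_max_of_le_right ?_
    nlinarith

end Aux

/-- Averaging a Legendre transform element of an invariant point with its image
under the adjoint involution stays in the Legendre transform set, with the same
Fenchel transform value. -/
theorem stmt_11 {E : Type*} [NormedAddCommGroup E] [InnerProductSpace ℝ E]
    [FiniteDimensional ℝ E]
    (A : E → ℝ) (hconv : ConvexOn ℝ Set.univ A)
    (hsup : ∀ C > (0:ℝ), ∃ R : ℝ, ∀ x : E, R ≤ ‖x‖ → C * ‖x‖ ≤ A x)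
    (T : E →ₗ[ℝ] E) (hT : T ∘ₗ T = LinearMap.id) (hAT : ∀ x : E, A (T x) = A x)
    (B : E → ℝ) (hB : ∀ y : E, B y = ⨆ x : E, (⟪y, x⟫ - A x))
    (h : E) (hh : T h = h)
    (y : E) (hy : B y + A h = ⟪y, h⟫) :
    B ((1/2 : ℝ) • (y + LinearMap.adjoint T y)) + A h
        = ⟪(1/2 : ℝ) • (y + LinearMap.adjoint T y), h⟫ ∧
    B ((1/2 : ℝ) • (y + LinearMap.adjoint T y)) = B y := by
  have hTT : ∀ x : E, T (T x) = x := fun x => congrFun (congrArg (·.toFun) hT) x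
  have hTsurj : Function.Surjective (T : E → E) := fun x => ⟨T x, hTT x⟩
  have hbdd : ∀ z : E, BddAbove (Set.range fun x : E => ⟪z, x⟫ - A x) :=
    bdd_aux A hconv hsup
  have hle : ∀ z x : E, ⟪z, x⟫ - A x ≤ B z := by
    intro z x
    rw [hB z]
    exact le_ciSup (hbdd z) x
  -- B (T* y) = B y
  have hBT : B (LinearMap.adjoint T y) = B y := by
    rw [hB, hB]
    have : ∀ x : E, ⟪LinearMap.adjoint T y, x⟫ - A x = ⟪y, T x⟫ - A (T x) := by
      intro x
      rw [LinearMap.adjoint_inner_left, hAT]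
    simp_rw [this]
    exact hTsurj.iSup_comp (fun u => ⟪y, u⟫ - A u)
  set y₁ := (1/2 : ℝ) • (y + LinearMap.adjoint T y) with hy₁
  have hinner : ⟪y₁, h⟫ = ⟪y, h⟫ := by
    rw [hy₁, real_inner_smul_left, inner_add_left, LinearMap.adjoint_inner_left, hh]
    ring
  -- B y₁ ≤ B y
  have hle1 : B y₁ ≤ B y := by
    rw [hB y₁]
    apply ciSup_le
    intro x
    have h1 := hle y x
    have h2 := hle (LinearMap.adjoint T y) x
    rw [hBT] at h2
    have : ⟪y₁, x⟫ = (1/2:ℝ) * ⟪y, x⟫ + (1/2:ℝ) * ⟪LinearMap.adjoint T y, x⟫ := by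
      rw [hy₁, real_inner_smul_left, inner_add_left]; ring
    linarith
  -- B y₁ ≥ B y
  have hge : B y ≤ B y₁ := by
    have := hle y₁ h
    rw [hinner] at this
    linarith
  have heq : B y₁ = B y := le_antisymm hle1 hge
  exact ⟨by rw [heq, hinner]; exact hy, heq⟩
end

section
/- Let E be a finite-dimensional real normed space with basis e₁, …, e_n, and let f : E → ℝ be convex with f(0) = 0. Suppose that for each i, f(t·e_i) = o(t) as t → 0⁺ and f(−t·e_i) = o(t) as t → 0⁺ (i.e. f(t·e_i)/|t| → 0 as t → 0 for every basis vector, in both directions). Then f is differentiable at 0 with derivative 0; equivalently, f(x) = o(‖x‖) as x → 0. -/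
/-!
Write `x = ∑ i, n⁻¹ • ((n * xᵢ) • eᵢ)`. By Jensen, `f x ≤ u x := n⁻¹ * ∑ i, f ((n * xᵢ) • eᵢ)`,
and `u` has derivative `0` at `0` by the chain rule applied to the one-dimensional hypotheses.
Convexity also gives the matching lower bound `f x ≥ -f (-x) ≥ -u (-x)`, so `f` is squeezed
between two functions that are `o(‖x‖)`.
-/

open Filter Topology Set

theorem ConvexOn.two_mul_le_map_add_add_map_sub {𝕜 E : Type*} [Field 𝕜] [LinearOrder 𝕜]
    [IsStrictOrderedRing 𝕜] [AddCommGroup E] [Module 𝕜 E] {f : E → 𝕜}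
    (hf : ConvexOn 𝕜 univ f) (x h : E) : 2 * f x ≤ f (x + h) + f (x - h) := by
  have := hf.2 (mem_univ (x + h)) (mem_univ (x - h)) (by norm_num : (0 : 𝕜) ≤ 2⁻¹)
    (by norm_num : (0 : 𝕜) ≤ 2⁻¹) (by norm_num)
  rw [← smul_add, add_add_sub_cancel, ← two_smul 𝕜 x, smul_smul, inv_mul_cancel₀ two_ne_zero,
    one_smul, smul_eq_mul, smul_eq_mul, ← mul_add] at this
  linarith

theorem ConvexOn.map_sum_le_inv_card_mul_sum {E ι : Type*} [AddCommGroup E] [Module ℝ E]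
    [Fintype ι] [Nonempty ι] {f : E → ℝ} (hf : ConvexOn ℝ univ f) (v : ι → E) :
    f (∑ i, v i) ≤ (Fintype.card ι : ℝ)⁻¹ * ∑ i, f ((Fintype.card ι : ℝ) • v i) := by
  have hcard : (Fintype.card ι : ℝ) ≠ 0 := by positivity
  have := hf.map_sum_le (t := Finset.univ) (w := fun _ => (Fintype.card ι : ℝ)⁻¹)
    (p := fun i => (Fintype.card ι : ℝ) • v i) (fun _ _ => by positivity)
    (by simp [hcard]) (fun _ _ => mem_univ _)
  simpa [smul_smul, hcard, ← Finset.mul_sum] using this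

theorem hasDerivAt_zero_of_tendsto_div_abs {φ : ℝ → ℝ} (h0 : φ 0 = 0)
    (h : Tendsto (fun t => φ t / |t|) (𝓝[≠] 0) (𝓝 0)) : HasDerivAt φ 0 0 := by
  rw [hasDerivAt_iff_tendsto_slope_zero]
  rw [tendsto_zero_iff_norm_tendsto_zero] at h ⊢
  simpa [h0, abs_div, div_eq_inv_mul] using h

theorem ConvexOn.hasFDerivAt_of_le_of_eq {E : Type*} [NormedAddCommGroup E] [NormedSpace ℝ E]
    {f u : E → ℝ} {u' : E →L[ℝ] ℝ} {x : E} (hf : ConvexOn ℝ univ f) (hle : ∀ y, f y ≤ u y)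
    (heq : f x = u x) (hu : HasFDerivAt u u' x) : HasFDerivAt f u' x := by
  rw [hasFDerivAt_iff_isLittleO_nhds_zero] at hu ⊢
  set w := fun h => u (x + h) - u x - u' h
  have hw_neg : (fun h => w (-h)) =o[𝓝 0] fun h => h :=
    Asymptotics.isLittleO_neg_right.mp
      (hu.comp_tendsto (continuous_neg.tendsto' (0 : E) 0 neg_zero))
  refine Asymptotics.IsBigO.trans_isLittleO (g := fun h => |w h| + |w (-h)|) ?_
    (hu.norm_left.add hw_neg.norm_left)
  refine .of_bound 1 (.of_forall fun h => ?_)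
  have hupper : f (x + h) - f x - u' h ≤ w h := by
    simp only [w]
    linarith [hle (x + h)]
  have hlower : -w (-h) ≤ f (x + h) - f x - u' h := by
    have := hf.two_mul_le_map_add_add_map_sub x h
    simp only [w, ← sub_eq_add_neg, map_neg]
    linarith [hle (x - h)]
  rw [one_mul, Real.norm_eq_abs, Real.norm_eq_abs, abs_le]
  constructor <;> linarith [le_abs_self (w h), le_abs_self (w (-h)), abs_nonneg (w h),
    abs_nonneg (w (-h)), le_abs_self (|w h| + |w (-h)|)]

/-- A convex function vanishing at `0` whose restriction to each basis direction is
`o(t)` at `0` is differentiable at `0` with derivative `0`. -/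
theorem stmt_14 {E : Type*} [NormedAddCommGroup E] [NormedSpace ℝ E]
    [FiniteDimensional ℝ E] {n : ℕ} (b : Module.Basis (Fin n) ℝ E)
    (f : E → ℝ) (hconv : ConvexOn ℝ Set.univ f) (hf0 : f 0 = 0)
    (ho : ∀ i : Fin n,
      Tendsto (fun t : ℝ => f (t • b i) / |t|) (𝓝[≠] (0:ℝ)) (𝓝 0)) :
    HasFDerivAt f (0 : E →L[ℝ] ℝ) 0 := by
  nontriviality E
  have := b.index_nonempty
  let c : Fin n → E →L[ℝ] ℝ := fun i => (n : ℝ) • LinearMap.toContinuousLinearMap (b.coord i)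
  refine hconv.hasFDerivAt_of_le_of_eq (u := fun x => (n : ℝ)⁻¹ * ∑ i, f (c i x • b i))
    (fun x => ?_) (by simp [hf0]) ?_
  · simpa [c, smul_smul] using hconv.map_sum_le_inv_card_mul_sum fun i => b.repr x i • b i
  · have hterm (i : Fin n) := (hasDerivAt_zero_of_tendsto_div_abs (by simpa using hf0)
      (ho i)).comp_hasFDerivAt_of_eq 0 (c i).hasFDerivAt (by simp)
    simpa using (HasFDerivAt.sum (u := Finset.univ) fun i _ => hterm i).const_mul (n : ℝ)⁻¹
end

section
/- Let f : ℝ → ℝ be convex, superlinear, and differentiable, with conjugate g. Fix s₀ ∈ ℝ and let [t₁, t₂] be the (possibly degenerate) set { t : f(t) + g(s₀) = s₀·t }. Suppose (t_n) is a sequence with t_n < t₁ for all n, such that f'(t_n) → s₀. Then t_n → t₁. -/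
open Filter Topology

/-- If `t_n < t₁` and `f'(t_n) → s₀`, where `[t₁,t₂]` is the set of Fenchel
equality points of `s₀`, then `t_n → t₁`. -/
theorem stmt_16 (f : ℝ → ℝ) (hconv : ConvexOn ℝ Set.univ f)
    (hsup : ∀ C > (0:ℝ), ∃ R : ℝ, ∀ t : ℝ, R ≤ |t| → C * |t| ≤ f t)
    (hdiff : Differentiable ℝ f)
    (g : ℝ → ℝ) (hg : ∀ s : ℝ, g s = ⨆ t : ℝ, (s * t - f t))
    (s₀ t₁ t₂ : ℝ)
    (hset : {t : ℝ | f t + g s₀ = s₀ * t} = Set.Icc t₁ t₂)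
    (t : ℕ → ℝ) (hlt : ∀ n, t n < t₁)
    (hderiv : Tendsto (fun n => deriv f (t n)) atTop (𝓝 s₀)) :
    Tendsto t atTop (𝓝 t₁) := by
  have hcont : Continuous f := hdiff.continuous
  -- superlinearity with C = |s₀| + 1
  obtain ⟨R, hR⟩ := hsup (|s₀| + 1) (by positivity)
  have hout : ∀ x : ℝ, R ≤ |x| → s₀ * x - f x ≤ -|x| := by
    intro x hx
    have h1 := hR x hx
    have h2 : s₀ * x ≤ |s₀| * |x| := by
      calc s₀ * x ≤ |s₀ * x| := le_abs_self _
        _ = |s₀| * |x| := abs_mul _ _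
    nlinarith
  -- the function h x = f x - s₀ x attains its global minimum
  set h : ℝ → ℝ := fun x => f x - s₀ * x with hh
  have hcont' : Continuous h := by fun_prop
  set R₀ : ℝ := max (max R 0) (|h 0| + 1) with hR₀
  have hR₀0 : (0:ℝ) ≤ R₀ := le_trans (le_max_right R 0) (le_max_left _ _)
  obtain ⟨xm, hxmI, hxm⟩ := (isCompact_Icc (a := -R₀) (b := R₀)).exists_isMinOn
    (Set.nonempty_Icc.2 (by linarith)) (hcont'.continuousOn)
  have hmin : ∀ x : ℝ, h xm ≤ h x := by
    intro x
    rcases le_or_gt (|x|) R₀ with hle | hgt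
    · exact hxm (abs_le.1 hle)
    · have hRx : R ≤ |x| := le_trans (le_trans (le_max_left R 0) (le_max_left _ _)) hgt.le
      have := hout x hRx
      have hx0 : h xm ≤ h 0 := hxm (by constructor <;> simp [hR₀0])
      have : |h 0| + 1 ≤ |x| := le_trans (le_max_right _ _) hgt.le
      have : h 0 ≤ |h 0| := le_abs_self _
      have hx' := hout x hRx
      simp only [hh] at *
      nlinarith [abs_nonneg (h 0)]
  -- g s₀ = - h xm
  have hbdd : ∀ x : ℝ, s₀ * x - f x ≤ -(h xm) := by
    intro x; have := hmin x; simp only [hh] at *; linarith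
  have hgval : g s₀ = -(h xm) := by
    rw [hg]
    apply le_antisymm (ciSup_le hbdd)
    have : s₀ * xm - f xm = -(h xm) := by simp only [hh]; ring
    calc -(h xm) = s₀ * xm - f xm := this.symm
      _ ≤ ⨆ x : ℝ, (s₀ * x - f x) := le_ciSup ⟨-(h xm), Set.forall_mem_range.2 hbdd⟩ xm
  -- xm belongs to the Fenchel set, so t₁ ≤ t₂
  have hxm_mem : xm ∈ Set.Icc t₁ t₂ := by
    rw [← hset]
    show f xm + g s₀ = s₀ * xm
    rw [hgval]; simp only [hh]; ring
  have ht12 : t₁ ≤ t₂ := le_trans hxm_mem.1 hxm_mem.2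
  have ht₁_mem : f t₁ + g s₀ = s₀ * t₁ := by
    have : t₁ ∈ {u : ℝ | f u + g s₀ = s₀ * u} := by
      rw [hset]; exact ⟨le_refl _, ht12⟩
    exact this
  -- lower bound on g
  have hge : ∀ x : ℝ, s₀ * x - f x ≤ g s₀ := by
    intro x; rw [hgval]; exact hbdd x
  -- key claim : deriv f x < s₀ for x < t₁
  have hkey : ∀ x : ℝ, x < t₁ → deriv f x < s₀ := by
    intro x hx
    have hnm : x ∉ Set.Icc t₁ t₂ := fun hc => absurd hc.1 (not_le.2 hx)
    have hne : f x + g s₀ ≠ s₀ * x := by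
      intro hc
      exact hnm (hset ▸ hc : x ∈ Set.Icc t₁ t₂)
    have hstrict : s₀ * x - f x < g s₀ := lt_of_le_of_ne (hge x) (by intro hc; apply hne; linarith)
    have hslope : deriv f x ≤ slope f x t₁ :=
      hconv.deriv_le_slope (Set.mem_univ x) (Set.mem_univ t₁) hx (hdiff x)
    have hslope_lt : slope f x t₁ < s₀ := by
      rw [slope_def_field]
      rw [div_lt_iff₀ (by linarith)]
      nlinarith
    linarith
  have hmono : MonotoneOn (deriv f) Set.univ :=
    hconv.monotoneOn_deriv (fun x _ => hdiff x)
  rw [tendsto_order]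
  constructor
  · intro a ha
    have hda : deriv f a < s₀ := hkey a ha
    filter_upwards [hderiv.eventually (eventually_gt_nhds hda)] with n hn
    by_contra hc
    push_neg at hc
    exact absurd (hmono (Set.mem_univ _) (Set.mem_univ _) hc) (not_le.2 hn)
  · intro a ha
    exact Eventually.of_forall fun n => lt_trans (hlt n) ha
end
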